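/- Let n_x, n_u, n_d, n_z be positive natural numbers, A ∈ ℝ^{n_x×n_x}, B_u ∈ ℝ^{n_x×n_u}, B_d ∈ ℝ^{n_x×n_d}, C_z ∈ ℝ^{n_z×n_x}, let W_d ∈ ℝ^{n_d×n_d} be an invertible diagonal matrix, and let γ > 0. Suppose there exist a symmetric positive definite Y ∈ ℝ^{n_x×n_x}, V ∈ ℝ^{n_u×n_x}, and vectors ω_c, κ ∈ ℝ^{n_u} with strictly positive entries such that, with P := [[Y·A, Y·B_u],[V, −diag(ω_c)]], the symmetric block matrix [[P + Pᵀ, [[Y·B_d, Y·B_u],[0, 0]], [[C_zᵀ],[0]]], [∗, −γ·blockdiag(W_d⁻², diag(κ)), 0], [∗, ∗, −γ·I]] is negative definite. Define A_cl := [[A, B_u],[V, −diag(ω_c)]], B_cl := [[B_d·W_d, B_u·diag(κ)^{−1/2}],[0, 0]], C_cl := [C_z, 0]. Then for every continuous w : [0, ∞) → ℝ^{n_d+n_u} and every differentiable ξ : [0, ∞) → ℝ^{n_x+n_u} with ξ(0) = 0 and ξ′(t) = A_cl·ξ(t) + B_cl·w(t) for all t ≥ 0, setting z(t) := C_cl·ξ(t),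 one has ∫₀^T ‖z(t)‖² dt ≤ γ²·∫₀^T ‖w(t)‖² dt for every T ≥ 0. -/

import Mathlib

open Matrix

noncomputable section

/-- The squared Euclidean norm of a vector. -/
def euclidNormSq {n : Type*} [Fintype n] (v : n → ℝ) : ℝ :=
  ∑ i, (v i) ^ 2

/-- `P = [[Y·A, Y·B_u],[V, −diag(ω_c)]]`. -/
def Pmat {nx nu : ℕ} (Y A : Matrix (Fin nx) (Fin nx) ℝ) (Bu : Matrix (Fin nx) (Fin nu) ℝ)
    (V : Matrix (Fin nu) (Fin nx) ℝ) (ω : Fin nu → ℝ) :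
    Matrix (Fin nx ⊕ Fin nu) (Fin nx ⊕ Fin nu) ℝ :=
  fromBlocks (Y * A) (Y * Bu) V (-(diagonal ω))

/-- Closed-loop `A_cl = [[A, B_u],[V, −diag(ω_c)]]`. -/
def Acl {nx nu : ℕ} (A : Matrix (Fin nx) (Fin nx) ℝ) (Bu : Matrix (Fin nx) (Fin nu) ℝ)
    (V : Matrix (Fin nu) (Fin nx) ℝ) (ω : Fin nu → ℝ) :
    Matrix (Fin nx ⊕ Fin nu) (Fin nx ⊕ Fin nu) ℝ :=
  fromBlocks A Bu V (-(diagonal ω))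

/-- Closed-loop `B_cl = [[B_d·W_d, B_u·diag(κ)^{−1/2}],[0, 0]]`. -/
def Bcl {nx nu nd : ℕ} (Bd : Matrix (Fin nx) (Fin nd) ℝ) (Wd : Matrix (Fin nd) (Fin nd) ℝ)
    (Bu : Matrix (Fin nx) (Fin nu) ℝ) (κ : Fin nu → ℝ) :
    Matrix (Fin nx ⊕ Fin nu) (Fin nd ⊕ Fin nu) ℝ :=
  fromBlocks (Bd * Wd) (Bu * diagonal fun i => (Real.sqrt (κ i))⁻¹) 0 0

/-- Closed-loop `C_cl = [C_z, 0]`. -/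
def Ccl {nx nu nz : ℕ} (Cz : Matrix (Fin nz) (Fin nx) ℝ) :
    Matrix (Fin nz) (Fin nx ⊕ Fin nu) ℝ :=
  fromCols Cz 0

lemma euclidNormSq_eq_dot {n : Type*} [Fintype n] (v : n → ℝ) :
    euclidNormSq v = v ⬝ᵥ v := by
  simp [euclidNormSq, dotProduct, sq]

lemma SDS_eq_one {nd nu : ℕ} (Wd : Matrix (Fin nd) (Fin nd) ℝ) (hWd : Wd.IsDiag)
    (hWdUnit : IsUnit Wd.det) (κ : Fin nu → ℝ) (hκ : ∀ i, 0 < κ i) :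
    (fromBlocks Wd 0 0 (diagonal fun i => (Real.sqrt (κ i))⁻¹))ᵀ *
      (fromBlocks (Wd⁻¹ * Wd⁻¹) 0 0 (diagonal κ) *
        fromBlocks Wd 0 0 (diagonal fun i => (Real.sqrt (κ i))⁻¹)) = 1 := by
  have hWdT : Wdᵀ = Wd := by
    ext i j
    rcases eq_or_ne i j with rfl | h
    · simp
    · rw [transpose_apply, hWd h, hWd (Ne.symm h)]
  have hdiag : (diagonal fun i => (Real.sqrt (κ i))⁻¹) *
      (diagonal κ * diagonal fun i => (Real.sqrt (κ i))⁻¹) = 1 := by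
    rw [diagonal_mul_diagonal, diagonal_mul_diagonal, ← diagonal_one]
    ext i j
    rcases eq_or_ne i j with rfl | hij
    · rw [diagonal_apply_eq, diagonal_apply_eq]
      have h1 : Real.sqrt (κ i) ≠ 0 := ne_of_gt (Real.sqrt_pos.2 (hκ i))
      have h2 : Real.sqrt (κ i) * Real.sqrt (κ i) = κ i := Real.mul_self_sqrt (hκ i).le
      rw [← h2]; field_simp
      rw [Real.sqrt_sq (Real.sqrt_nonneg _)]
    · rw [diagonal_apply_ne _ hij, diagonal_apply_ne _ hij]
  have hWdblk : Wd * (Wd⁻¹ * (Wd⁻¹ * Wd)) = 1 := by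
    rw [Matrix.nonsing_inv_mul Wd hWdUnit, Matrix.mul_one, Matrix.mul_nonsing_inv Wd hWdUnit]
  rw [fromBlocks_transpose, hWdT, transpose_zero, transpose_zero, diagonal_transpose,
    fromBlocks_multiply, fromBlocks_multiply]
  simp only [Matrix.mul_zero, Matrix.zero_mul, add_zero, zero_add, Matrix.mul_assoc]
  rw [hWdblk, hdiag, fromBlocks_one]

lemma key_ineq {nx nu nd nz : ℕ}
    (A : Matrix (Fin nx) (Fin nx) ℝ) (Bu : Matrix (Fin nx) (Fin nu) ℝ)
    (Bd : Matrix (Fin nx) (Fin nd) ℝ) (Cz : Matrix (Fin nz) (Fin nx) ℝ)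
    (Wd : Matrix (Fin nd) (Fin nd) ℝ) (hWd : Wd.IsDiag) (hWdUnit : IsUnit Wd.det)
    (γ : ℝ) (hγ : 0 < γ)
    (Y : Matrix (Fin nx) (Fin nx) ℝ)
    (V : Matrix (Fin nu) (Fin nx) ℝ)
    (ω κ : Fin nu → ℝ) (hκ : ∀ i, 0 < κ i)
    (hLMI : (-(fromBlocks
        (Pmat Y A Bu V ω + (Pmat Y A Bu V ω)ᵀ)
        (fromCols (fromBlocks (Y * Bd) (Y * Bu) 0 0) (fromRows Czᵀ 0))
        (fromCols (fromBlocks (Y * Bd) (Y * Bu) 0 0) (fromRows Czᵀ 0))ᵀ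
        (fromBlocks (-(γ • fromBlocks (Wd⁻¹ * Wd⁻¹) 0 0 (diagonal κ))) 0 0
          (-(γ • (1 : Matrix (Fin nz) (Fin nz) ℝ)))))).PosDef)
    (x : Fin nx ⊕ Fin nu → ℝ) (wv : Fin nd ⊕ Fin nu → ℝ) :
    2 * (x ⬝ᵥ ((Pmat Y A Bu V ω) *ᵥ x)) +
      2 * (x ⬝ᵥ ((fromBlocks (Y * Bd) (Y * Bu) 0 0 *
        fromBlocks Wd 0 0 (diagonal fun i => (Real.sqrt (κ i))⁻¹)) *ᵥ wv))
      ≤ γ * euclidNormSq wv - γ⁻¹ * euclidNormSq (Ccl (nu := nu) Cz *ᵥ x) := by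
  set P := Pmat Y A Bu V ω with hP
  set B0 : Matrix (Fin nx ⊕ Fin nu) (Fin nd ⊕ Fin nu) ℝ := fromBlocks (Y * Bd) (Y * Bu) 0 0 with hB0
  set S : Matrix (Fin nd ⊕ Fin nu) (Fin nd ⊕ Fin nu) ℝ :=
    fromBlocks Wd 0 0 (diagonal fun i => (Real.sqrt (κ i))⁻¹) with hS
  set D : Matrix (Fin nd ⊕ Fin nu) (Fin nd ⊕ Fin nu) ℝ :=
    fromBlocks (Wd⁻¹ * Wd⁻¹) 0 0 (diagonal κ) with hD
  set N : Matrix (Fin nx ⊕ Fin nu) (Fin nz) ℝ := fromRows Czᵀ 0 with hN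
  set Bb := fromCols B0 N with hBb
  set z : Fin nz → ℝ := Ccl (nu := nu) Cz *ᵥ x with hz
  set v : Fin nd ⊕ Fin nu → ℝ := S *ᵥ wv with hv
  set u : Fin nz → ℝ := γ⁻¹ • z with hu
  set η : (Fin nd ⊕ Fin nu) ⊕ Fin nz → ℝ := Sum.elim v u with hη
  set ζ := Sum.elim x η with hζ
  have h0 := hLMI.posSemidef.dotProduct_mulVec_nonneg ζ
  rw [neg_mulVec, dotProduct_neg] at h0
  have h0' : ζ ⬝ᵥ ((fromBlocks (P + Pᵀ) Bb Bbᵀ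
      (fromBlocks (-(γ • D)) 0 0 (-(γ • (1 : Matrix (Fin nz) (Fin nz) ℝ))))) *ᵥ ζ) ≤ 0 := by
    have : star ζ = ζ := by funext i; simp
    rw [this] at h0
    linarith
  -- expand the quadratic form
  rw [hζ, fromBlocks_mulVec, sumElim_dotProduct_sumElim] at h0'
  simp only [Sum.elim_comp_inl, Sum.elim_comp_inr] at h0'
  rw [dotProduct_add, dotProduct_add] at h0'
  -- T1
  have hT1 : x ⬝ᵥ ((P + Pᵀ) *ᵥ x) = 2 * (x ⬝ᵥ (P *ᵥ x)) := by
    rw [add_mulVec, dotProduct_add, dotProduct_mulVec x Pᵀ x, vecMul_transpose,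
      dotProduct_comm]
    ring
  -- T2
  have hNmul : ∀ y : Fin nz → ℝ, x ⬝ᵥ (N *ᵥ y) = z ⬝ᵥ y := by
    intro y
    rw [dotProduct_mulVec, hN, hz, Ccl, show (fromRows Czᵀ (0 : Matrix (Fin nu) (Fin nz) ℝ)) =
      (fromCols Cz 0)ᵀ by rw [transpose_fromCols, transpose_zero], vecMul_transpose]
  have hT2 : x ⬝ᵥ (Bb *ᵥ η) = x ⬝ᵥ ((B0 * S) *ᵥ wv) + γ⁻¹ * (z ⬝ᵥ z) := by
    rw [hBb, hη, fromCols_mulVec_sumElim, dotProduct_add, hNmul u, hu,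
      dotProduct_smul, ← mulVec_mulVec, ← hv]
    simp [smul_eq_mul]
  -- T3
  have hT3 : η ⬝ᵥ (Bbᵀ *ᵥ x) = x ⬝ᵥ (Bb *ᵥ η) := by
    rw [dotProduct_mulVec η Bbᵀ x, vecMul_transpose, dotProduct_comm]
  -- T4
  have hvDv : v ⬝ᵥ (D *ᵥ v) = wv ⬝ᵥ wv := by
    rw [hv, mulVec_mulVec, show S *ᵥ wv = wv ᵥ* Sᵀ from (vecMul_transpose S wv).symm,
      ← dotProduct_mulVec, mulVec_mulVec, SDS_eq_one Wd hWd hWdUnit κ hκ, one_mulVec]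
  have hT4 : η ⬝ᵥ ((fromBlocks (-(γ • D)) 0 0
      (-(γ • (1 : Matrix (Fin nz) (Fin nz) ℝ)))) *ᵥ η)
      = -(γ * (wv ⬝ᵥ wv)) - γ * (γ⁻¹ * (γ⁻¹ * (z ⬝ᵥ z))) := by
    rw [hη, fromBlocks_mulVec, sumElim_dotProduct_sumElim]
    simp only [Sum.elim_comp_inl, Sum.elim_comp_inr, zero_mulVec, add_zero, zero_add,
      neg_mulVec, dotProduct_neg, smul_mulVec, one_mulVec, dotProduct_smul,
      smul_eq_mul]
    rw [hvDv, hu, smul_dotProduct, dotProduct_smul, smul_eq_mul, smul_eq_mul]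
    ring
  rw [hT1, hT2, hT3, hT2, hT4] at h0'
  have hγ1 : γ * (γ⁻¹ * (γ⁻¹ * (z ⬝ᵥ z))) = γ⁻¹ * (z ⬝ᵥ z) := by
    field_simp
  rw [hγ1] at h0'
  rw [euclidNormSq_eq_dot, euclidNormSq_eq_dot]
  linarith

lemma hasDerivWithinAt_quadForm {ι : Type*} [Fintype ι] (M : Matrix ι ι ℝ)
    (ξ : ℝ → ι → ℝ) (d : ι → ℝ) (s : Set ℝ) (t : ℝ)
    (hξ : HasDerivWithinAt ξ d s t) :
    HasDerivWithinAt (fun τ => ξ τ ⬝ᵥ (M *ᵥ ξ τ))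
      (d ⬝ᵥ (M *ᵥ ξ t) + ξ t ⬝ᵥ (M *ᵥ d)) s t := by
  have hc : ∀ i, HasDerivWithinAt (fun τ => ξ τ i) (d i) s t :=
    fun i => hasDerivWithinAt_pi.1 hξ i
  have hM : ∀ i, HasDerivWithinAt (fun τ => ∑ j, M i j * ξ τ j) (∑ j, M i j * d j) s t :=
    fun i => HasDerivWithinAt.fun_sum fun j _ => (hc j).const_mul _
  have h := HasDerivWithinAt.fun_sum (u := Finset.univ)
    (fun i (_ : i ∈ Finset.univ) => (hc i).mul (hM i))
  refine HasDerivWithinAt.congr_deriv h ?_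
  simp only [dotProduct, mulVec, Finset.sum_add_distrib]

lemma continuousOn_dotP {α : Type*} [TopologicalSpace α] {ι : Type*} [Fintype ι]
    {f g : α → ι → ℝ} {s : Set α} (hf : ContinuousOn f s) (hg : ContinuousOn g s) :
    ContinuousOn (fun t => f t ⬝ᵥ g t) s := by
  simp only [dotProduct]
  exact continuousOn_finset_sum _ fun i _ =>
    (((continuous_apply i).comp_continuousOn hf).mul ((continuous_apply i).comp_continuousOn hg))

lemma continuousOn_matVec {α : Type*} [TopologicalSpace α] {ι κ : Type*} [Fintype κ]
    (M : Matrix ι κ ℝ) {f : α → κ → ℝ} {s : Set α} (hf : ContinuousOn f s) :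
    ContinuousOn (fun t => M *ᵥ f t) s := by
  apply continuousOn_pi.2; intro i
  simp only [mulVec, dotProduct]
  exact continuousOn_finset_sum _ fun j _ =>
    continuousOn_const.mul ((continuous_apply j).comp_continuousOn hf)

/-- Time-domain formulation of Theorem 1 of the paper: the feasible LMI certifies that
the closed-loop system has L₂-gain at most `γ` from the normalized exogenous inputs `w`
to the controlled output `z`. -/
theorem hinf_lmi_l2_gain {nx nu nd nz : ℕ}
    (hnx : 0 < nx) (hnu : 0 < nu) (hnd : 0 < nd) (hnz : 0 < nz)
    (A : Matrix (Fin nx) (Fin nx) ℝ) (Bu : Matrix (Fin nx) (Fin nu) ℝ)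
    (Bd : Matrix (Fin nx) (Fin nd) ℝ) (Cz : Matrix (Fin nz) (Fin nx) ℝ)
    (Wd : Matrix (Fin nd) (Fin nd) ℝ) (hWd : Wd.IsDiag) (hWdUnit : IsUnit Wd.det)
    (γ : ℝ) (hγ : 0 < γ)
    (Y : Matrix (Fin nx) (Fin nx) ℝ) (hY : Y.PosDef)
    (V : Matrix (Fin nu) (Fin nx) ℝ)
    (ω κ : Fin nu → ℝ) (hω : ∀ i, 0 < ω i) (hκ : ∀ i, 0 < κ i)
    (hLMI : (-(fromBlocks
        (Pmat Y A Bu V ω + (Pmat Y A Bu V ω)ᵀ)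
        (fromCols (fromBlocks (Y * Bd) (Y * Bu) 0 0) (fromRows Czᵀ 0))
        (fromCols (fromBlocks (Y * Bd) (Y * Bu) 0 0) (fromRows Czᵀ 0))ᵀ
        (fromBlocks (-(γ • fromBlocks (Wd⁻¹ * Wd⁻¹) 0 0 (diagonal κ))) 0 0
          (-(γ • (1 : Matrix (Fin nz) (Fin nz) ℝ)))))).PosDef) :
    ∀ w : ℝ → (Fin nd ⊕ Fin nu) → ℝ, ContinuousOn w (Set.Ici (0 : ℝ)) →
      ∀ ξ : ℝ → (Fin nx ⊕ Fin nu) → ℝ, ξ 0 = 0 →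
        (∀ t ∈ Set.Ici (0 : ℝ),
          HasDerivWithinAt ξ (Acl A Bu V ω *ᵥ ξ t + Bcl Bd Wd Bu κ *ᵥ w t)
            (Set.Ici (0 : ℝ)) t) →
        ∀ T : ℝ, 0 ≤ T →
          ∫ t in (0 : ℝ)..T, euclidNormSq (Ccl (nu := nu) Cz *ᵥ ξ t)
            ≤ γ ^ 2 * ∫ t in (0 : ℝ)..T, euclidNormSq (w t) := by
  intro w hw ξ hξ0 hξd T hT
  set Mm : Matrix (Fin nx ⊕ Fin nu) (Fin nx ⊕ Fin nu) ℝ :=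
    fromBlocks Y 0 0 (1 : Matrix (Fin nu) (Fin nu) ℝ) with hMm
  have hYT : Yᵀ = Y := by
    ext i j
    have := congrFun (congrFun hY.1 i) j
    simpa using this
  have hMsym : Mmᵀ = Mm := by
    rw [hMm, fromBlocks_transpose, transpose_zero, transpose_zero, transpose_one, hYT]
  have hMA : Mm * Acl A Bu V ω = Pmat Y A Bu V ω := by
    simp [hMm, Acl, Pmat, fromBlocks_multiply]
  have hMB : Mm * Bcl Bd Wd Bu κ =
      fromBlocks (Y * Bd) (Y * Bu) 0 0 *
        fromBlocks Wd 0 0 (diagonal fun i => (Real.sqrt (κ i))⁻¹) := by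
    simp [hMm, Bcl, fromBlocks_multiply, Matrix.mul_assoc]
  have hsymdot : ∀ a b : Fin nx ⊕ Fin nu → ℝ, a ⬝ᵥ (Mm *ᵥ b) = b ⬝ᵥ (Mm *ᵥ a) := by
    intro a b
    rw [dotProduct_mulVec a Mm b]
    nth_rewrite 1 [← hMsym]
    rw [vecMul_transpose, dotProduct_comm]
  have hξc : ContinuousOn ξ (Set.Ici (0 : ℝ)) := fun t ht => (hξd t ht).continuousWithinAt
  have hIcc : Set.Icc (0 : ℝ) T ⊆ Set.Ici 0 := Set.Icc_subset_Ici_self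
  have hξc' : ContinuousOn ξ (Set.Icc 0 T) := hξc.mono hIcc
  have hwc' : ContinuousOn w (Set.Icc 0 T) := hw.mono hIcc
  -- derivative of the storage function
  have hgderiv : ∀ t ∈ Set.Ici (0 : ℝ),
      HasDerivWithinAt (fun τ => ξ τ ⬝ᵥ (Mm *ᵥ ξ τ))
        (2 * (ξ t ⬝ᵥ (Mm *ᵥ (Acl A Bu V ω *ᵥ ξ t + Bcl Bd Wd Bu κ *ᵥ w t))))
        (Set.Ici 0) t := by
    intro t ht
    have h := hasDerivWithinAt_quadForm Mm ξ _ _ t (hξd t ht)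
    convert h using 1
    rw [hsymdot (ξ t) (Acl A Bu V ω *ᵥ ξ t + Bcl Bd Wd Bu κ *ᵥ w t)]
    ring
  -- pointwise dissipation bound
  have hbound : ∀ t,
      2 * (ξ t ⬝ᵥ (Mm *ᵥ (Acl A Bu V ω *ᵥ ξ t + Bcl Bd Wd Bu κ *ᵥ w t)))
        ≤ γ * euclidNormSq (w t) - γ⁻¹ * euclidNormSq (Ccl (nu := nu) Cz *ᵥ ξ t) := by
    intro t
    have hk := key_ineq A Bu Bd Cz Wd hWd hWdUnit γ hγ Y V ω κ hκ hLMI (ξ t) (w t)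
    have heq : 2 * (ξ t ⬝ᵥ (Mm *ᵥ (Acl A Bu V ω *ᵥ ξ t + Bcl Bd Wd Bu κ *ᵥ w t)))
        = 2 * (ξ t ⬝ᵥ ((Pmat Y A Bu V ω) *ᵥ ξ t)) +
          2 * (ξ t ⬝ᵥ ((fromBlocks (Y * Bd) (Y * Bu) 0 0 *
            fromBlocks Wd 0 0 (diagonal fun i => (Real.sqrt (κ i))⁻¹)) *ᵥ w t)) := by
      rw [mulVec_add, dotProduct_add, mulVec_mulVec, mulVec_mulVec, hMA, hMB]
      ring
    rw [heq]
    exact hk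
  -- continuity / integrability
  have hzc : ContinuousOn (fun t => euclidNormSq (Ccl (nu := nu) Cz *ᵥ ξ t))
      (Set.Icc 0 T) := by
    simp only [euclidNormSq_eq_dot]
    exact continuousOn_dotP (continuousOn_matVec _ hξc') (continuousOn_matVec _ hξc')
  have hwn : ContinuousOn (fun t => euclidNormSq (w t)) (Set.Icc 0 T) := by
    simp only [euclidNormSq_eq_dot]
    exact continuousOn_dotP hwc' hwc'
  have hφcont : ContinuousOn (fun t => γ * euclidNormSq (w t)
      - γ⁻¹ * euclidNormSq (Ccl (nu := nu) Cz *ᵥ ξ t)) (Set.Icc 0 T) :=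
    (continuousOn_const.mul hwn).sub (continuousOn_const.mul hzc)
  have hφint : MeasureTheory.IntegrableOn (fun t => γ * euclidNormSq (w t)
      - γ⁻¹ * euclidNormSq (Ccl (nu := nu) Cz *ᵥ ξ t)) (Set.Icc 0 T) :=
    hφcont.integrableOn_Icc
  have hgcont : ContinuousOn (fun τ => ξ τ ⬝ᵥ (Mm *ᵥ ξ τ)) (Set.Icc 0 T) :=
    continuousOn_dotP hξc' (continuousOn_matVec _ hξc')
  -- FTC inequality
  have hkey := intervalIntegral.sub_le_integral_of_hasDeriv_right_of_le_Ico hT hgcont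
    (fun x hx => (hgderiv x hx.1).mono (fun y hy => le_trans hx.1 hy.le))
    hφint (fun x _ => hbound x)
  -- endpoints
  have hg0 : ξ 0 ⬝ᵥ (Mm *ᵥ ξ 0) = 0 := by rw [hξ0]; simp
  have hgT : 0 ≤ ξ T ⬝ᵥ (Mm *ᵥ ξ T) := by
    set y := ξ T
    have hy : y = Sum.elim (y ∘ Sum.inl) (y ∘ Sum.inr) := (Sum.elim_comp_inl_inr y).symm
    rw [hy, hMm, fromBlocks_mulVec, sumElim_dotProduct_sumElim]
    simp only [Sum.elim_comp_inl, Sum.elim_comp_inr, zero_mulVec, add_zero, zero_add,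
      one_mulVec]
    have h1 : 0 ≤ (y ∘ Sum.inl) ⬝ᵥ (Y *ᵥ (y ∘ Sum.inl)) := by
      have := hY.posSemidef.dotProduct_mulVec_nonneg (y ∘ Sum.inl)
      simpa using this
    have h2 : 0 ≤ (y ∘ Sum.inr) ⬝ᵥ (y ∘ Sum.inr) :=
      Finset.sum_nonneg fun i _ => mul_self_nonneg _
    linarith
  -- split the integral
  have hint1 : IntervalIntegrable (fun t => euclidNormSq (w t))
      MeasureTheory.volume 0 T := by
    apply ContinuousOn.intervalIntegrable
    rwa [Set.uIcc_of_le hT]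
  have hint2 : IntervalIntegrable (fun t => euclidNormSq (Ccl (nu := nu) Cz *ᵥ ξ t))
      MeasureTheory.volume 0 T := by
    apply ContinuousOn.intervalIntegrable
    rwa [Set.uIcc_of_le hT]
  have hsplit : (∫ t in (0 : ℝ)..T, (γ * euclidNormSq (w t)
      - γ⁻¹ * euclidNormSq (Ccl (nu := nu) Cz *ᵥ ξ t)))
      = γ * (∫ t in (0 : ℝ)..T, euclidNormSq (w t))
        - γ⁻¹ * (∫ t in (0 : ℝ)..T, euclidNormSq (Ccl (nu := nu) Cz *ᵥ ξ t)) := by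
    rw [intervalIntegral.integral_sub (hint1.const_mul γ) (hint2.const_mul γ⁻¹),
      intervalIntegral.integral_const_mul, intervalIntegral.integral_const_mul]
  rw [hsplit, hg0] at hkey
  set Iz := ∫ t in (0 : ℝ)..T, euclidNormSq (Ccl (nu := nu) Cz *ᵥ ξ t)
  set Iw := ∫ t in (0 : ℝ)..T, euclidNormSq (w t)
  have h2 : γ⁻¹ * Iz ≤ γ * Iw := by linarith
  have h3 := mul_le_mul_of_nonneg_left h2 hγ.le
  have h4 : γ * (γ⁻¹ * Iz) = Iz := by field_simp
  calc Iz = γ * (γ⁻¹ * Iz) := h4.symm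
    _ ≤ γ * (γ * Iw) := h3
    _ = γ ^ 2 * Iw := by ring
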